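/- arXiv:1311.6216 — 9 statements merged into one kernel-verified Lean document; each statement's English description precedes it below -/
import Mathlib

section
/- If R0 > 1, then the point (i_h1, i_m1, r_m1), where i_h1 = (R0−1)·δμ·(p+qx)² / [(1−r)·acp·e^{−Λτ}·(abmp + μ(p+qx))], i_m1 = (R0−1)·(p+qx)²·μδ / [abmp·(1−r)·(δ(p+qx) + acp·e^{−Λτ} + δaγqx/(δ+θ))], and r_m1 = r·(1 − i_m1), satisfies the homogeneous-mixing equilibrium system (E1)–(E3). -/
/-!
Write `s = p + q x`, `T = δ + θ` and `A = a γ q x`, so that `r = A / (s T + A)`.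
With `r_m = r (1 - i_m)` the free mosquito fraction is `1 - i_m - r_m = (1 - r)(1 - i_m)`, and
(E3) holds for every `i_m`. What remains of (E1)–(E2) is the Ross–Macdonald SIS system with
biting rates `β = a b m p / s` and `κ = (1 - r) a c p e^{-Λτ} / s`, whose basic reproduction number
`β κ / (δ μ)` is `R0`; its endemic point is the classical one.
-/

theorem ross_macdonald_endemic_equilibrium {β κ δ μ R ih im : ℝ}
    (hβ : β ≠ 0) (hκ : κ ≠ 0) (hδ : δ ≠ 0) (hμ : μ ≠ 0)
    (hβμ : β + μ ≠ 0) (hκδ : κ + δ ≠ 0)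
    (hR : R = β * κ / (δ * μ))
    (hih : ih = (R - 1) * δ * μ / (κ * (β + μ)))
    (him : im = (R - 1) * δ * μ / (β * (κ + δ))) :
    μ * ih = β * (1 - ih) * im ∧ δ * im = κ * (1 - im) * ih := by
  subst hR hih him
  constructor <;> (field_simp; ring)

theorem mul_div_add_eq_div_mul_one_sub {s T A : ℝ} (hs : s ≠ 0) (hsTA : s * T + A ≠ 0) :
    T * (A / (s * T + A)) = A / s * (1 - A / (s * T + A)) := by
  rw [one_sub_div hsTA]
  field_simp
  ring

theorem endemic_point_satisfies_homogeneous_equilibrium_general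
    (a b c m δ μ θ γ τ x p q r Λ R0 ih1 im1 rm1 : ℝ)
    (ha : 0 < a) (hb : 0 < b) (hc : 0 < c) (hm : 0 < m)
    (hδ : 0 < δ) (hμ : 0 < μ) (hθ : 0 < θ) (hγ : 0 < γ)
    (hx : 0 < x) (hp0 : 0 < p) (hp1 : p < 1)
    (hq : q = 1 - p)
    (hr : r = a * γ * q * x / ((p + q * x) * (δ + θ) + a * γ * q * x))
    (hR0 : R0 = a ^ 2 * b * c * m * p ^ 2 * (1 - r) * Real.exp (-Λ * τ) /
      (δ * μ * (p + q * x) ^ 2))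
    (hih1 : ih1 = (R0 - 1) * δ * μ * (p + q * x) ^ 2 /
      ((1 - r) * (a * c * p) * Real.exp (-Λ * τ) * (a * b * m * p + μ * (p + q * x))))
    (him1 : im1 = (R0 - 1) * (p + q * x) ^ 2 * μ * δ /
      (a * b * m * p * (1 - r) *
        (δ * (p + q * x) + a * c * p * Real.exp (-Λ * τ) + δ * a * γ * q * x / (δ + θ))))
    (hrm1 : rm1 = r * (1 - im1)) :
    -- (E1)
    μ * ih1 = (a * b * m * p / (p + q * x)) * (1 - ih1) * im1 ∧
    -- (E2)
    δ * im1 = (a * c * p * Real.exp (-Λ * τ) / (p + q * x)) * (1 - im1 - rm1) * ih1 ∧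
    -- (E3)
    (θ + δ) * rm1 = (a * γ * q * x / (p + q * x)) * (1 - im1 - rm1) := by
  have hq0 : 0 < q := by linarith
  have hs : 0 < p + q * x := by positivity
  have hsTA : 0 < (p + q * x) * (δ + θ) + a * γ * q * x := by positivity
  have hE : 0 < Real.exp (-Λ * τ) := Real.exp_pos _
  have h1r : 1 - r = (p + q * x) * (δ + θ) / ((p + q * x) * (δ + θ) + a * γ * q * x) := by
    rw [hr]; field_simp; ring
  have h1r0 : 0 < 1 - r := by rw [h1r]; positivity
  have hfree : 1 - im1 - rm1 = (1 - r) * (1 - im1) := by rw [hrm1]; ring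
  obtain ⟨e1, e2⟩ := ross_macdonald_endemic_equilibrium (R := R0) (ih := ih1) (im := im1)
    (β := a * b * m * p / (p + q * x))
    (κ := (1 - r) * (a * c * p * Real.exp (-Λ * τ)) / (p + q * x))
    (by positivity) (by positivity) hδ.ne' hμ.ne' (by positivity) (by positivity)
    (by rw [hR0]; field_simp) (by rw [hih1]; field_simp)
    (by rw [him1, h1r]; field_simp; ring)
  refine ⟨e1, by rw [e2, hfree]; ring, ?_⟩
  rw [hfree, hrm1, hr, add_comm θ, ← mul_assoc, mul_div_add_eq_div_mul_one_sub hs.ne' hsTA.ne', ← hr]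
  ring

/-- If R0 > 1 then the endemic point (i_h1, i_m1, r_m1)
satisfies the homogeneous-mixing equilibrium system (E1)–(E3). -/
theorem endemic_point_satisfies_homogeneous_equilibrium
    (a b c m δ μ θ γ τ x p q r Λ R0 ih1 im1 rm1 : ℝ)
    (ha : 0 < a) (hb : 0 < b) (hc : 0 < c) (hm : 0 < m)
    (hδ : 0 < δ) (hμ : 0 < μ) (hθ : 0 < θ) (hγ : 0 < γ)
    (hτ : 0 < τ) (hx : 0 < x) (hp0 : 0 < p) (hp1 : p < 1)
    (hq : q = 1 - p)
    (hr : r = a * γ * q * x / ((p + q * x) * (δ + θ) + a * γ * q * x))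
    (hΛ : Λ = δ + a * γ * q * x / (p + q * x))
    (hR0 : R0 = a ^ 2 * b * c * m * p ^ 2 * (1 - r) * Real.exp (-Λ * τ) /
      (δ * μ * (p + q * x) ^ 2))
    (hR0gt : 1 < R0)
    (hih1 : ih1 = (R0 - 1) * δ * μ * (p + q * x) ^ 2 /
      ((1 - r) * (a * c * p) * Real.exp (-Λ * τ) * (a * b * m * p + μ * (p + q * x))))
    (him1 : im1 = (R0 - 1) * (p + q * x) ^ 2 * μ * δ /
      (a * b * m * p * (1 - r) *
        (δ * (p + q * x) + a * c * p * Real.exp (-Λ * τ) + δ * a * γ * q * x / (δ + θ))))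
    (hrm1 : rm1 = r * (1 - im1)) :
    -- (E1)
    μ * ih1 = (a * b * m * p / (p + q * x)) * (1 - ih1) * im1 ∧
    -- (E2)
    δ * im1 = (a * c * p * Real.exp (-Λ * τ) / (p + q * x)) * (1 - im1 - rm1) * ih1 ∧
    -- (E3)
    (θ + δ) * rm1 = (a * γ * q * x / (p + q * x)) * (1 - im1 - rm1) :=
  endemic_point_satisfies_homogeneous_equilibrium_general a b c m δ μ θ γ τ x p q r Λ R0 ih1 im1 rm1
    ha hb hc hm hδ hμ hθ hγ hx hp0 hp1 hq hr hR0 hih1 him1 hrm1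
end

section
/- If R0 ≤ 1, then the homogeneous-mixing equilibrium system has a unique biologically admissible solution: every (i_h, i_m, r_m) with 0 ≤ i_h ≤ 1, 0 ≤ i_m, 0 ≤ r_m and i_m + r_m ≤ 1 that satisfies (E1)–(E3) must have i_h = 0, i_m = 0 and r_m = r. -/
/-- If R0 ≤ 1, every biologically admissible solution of the
homogeneous-mixing equilibrium system (E1)–(E3) is the disease-free point
(0, 0, r). -/
theorem homogeneous_equilibrium_unique_of_R0_le_one
    (a b c m δ μ θ γ τ x p q r Λ R0 : ℝ)
    (ha : 0 < a) (hb : 0 < b) (hc : 0 < c) (hm : 0 < m)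
    (hδ : 0 < δ) (hμ : 0 < μ) (hθ : 0 < θ) (hγ : 0 < γ)
    (hτ : 0 < τ) (hx : 0 < x) (hp0 : 0 < p) (hp1 : p < 1)
    (hq : q = 1 - p)
    (hr : r = a * γ * q * x / ((p + q * x) * (δ + θ) + a * γ * q * x))
    (hΛ : Λ = δ + a * γ * q * x / (p + q * x))
    (hR0 : R0 = a ^ 2 * b * c * m * p ^ 2 * (1 - r) * Real.exp (-Λ * τ) /
      (δ * μ * (p + q * x) ^ 2))
    (hR0le : R0 ≤ 1) :
    ∀ ih im rm : ℝ,
      0 ≤ ih → ih ≤ 1 → 0 ≤ im → 0 ≤ rm → im + rm ≤ 1 →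
      -- (E1)
      μ * ih = (a * b * m * p / (p + q * x)) * (1 - ih) * im →
      -- (E2)
      δ * im = (a * c * p * Real.exp (-Λ * τ) / (p + q * x)) * (1 - im - rm) * ih →
      -- (E3)
      (θ + δ) * rm = (a * γ * q * x / (p + q * x)) * (1 - im - rm) →
      ih = 0 ∧ im = 0 ∧ rm = r := by
  intro ih im rm hih0 hih1 him0 hrm0 hsum hE1 hE2 hE3
  have hqpos : 0 < q := by rw [hq]; linarith
  have hP : 0 < p + q * x := by positivity
  set P := p + q * x with hPdef
  set A := a * γ * q * x with hAdef
  set D := P * (δ + θ) with hDdef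
  set E := Real.exp (-Λ * τ) with hEdef
  have hA : 0 < A := by rw [hAdef]; positivity
  have hD : 0 < D := by rw [hDdef]; positivity
  have hE : 0 < E := Real.exp_pos _
  set K := a ^ 2 * b * c * m * p ^ 2 * E with hKdef
  have hK : 0 < K := by rw [hKdef]; positivity
  have hDA : 0 < D + A := by linarith
  -- r * (D + A) = A
  have hrDA : r * (D + A) = A := by
    rw [hr]; exact div_mul_cancel₀ A hDA.ne'
  have h1r : (1 - r) * (D + A) = D := by linarith [hrDA]
  -- R0 bound cleared of denominators
  have hnum : a ^ 2 * b * c * m * p ^ 2 * (1 - r) * E ≤ δ * μ * P ^ 2 := by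
    rw [hR0, div_le_one (by positivity)] at hR0le
    exact hR0le
  have hR0le' : K * (1 - r) ≤ δ * μ * P ^ 2 := by
    have hKe : K * (1 - r) = a ^ 2 * b * c * m * p ^ 2 * (1 - r) * E := by
      rw [hKdef]; ring
    rw [hKe]; exact hnum
  -- cleared equations
  have hE1' : μ * ih * P = a * b * m * p * (1 - ih) * im := by
    field_simp at hE1; linear_combination hE1
  have hE2' : δ * im * P = a * c * p * E * (1 - im - rm) * ih := by
    field_simp at hE2; linear_combination hE2
  have hE3' : (θ + δ) * rm * P = A * (1 - im - rm) := by
    field_simp at hE3; linear_combination hE3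
  have hkey : D * (1 - im) = (D + A) * (1 - im - rm) := by
    rw [hDdef]; linear_combination hE3'
  rcases eq_or_lt_of_le hih0 with h0 | hihpos
  · -- ih = 0
    have hih : ih = 0 := h0.symm
    have him : im = 0 := by
      have hz : δ * im * P = 0 := by rw [hE2', hih]; ring
      rcases mul_eq_zero.mp hz with h | h
      · rcases mul_eq_zero.mp h with h' | h'
        · exact absurd h' hδ.ne'
        · exact h'
      · exact absurd h hP.ne'
    refine ⟨hih, him, ?_⟩
    have h1 : rm * (D + A) = A := by
      rw [him] at hkey; linarith [hkey]
    have h2 : (rm - r) * (D + A) = 0 := by linarith [hrDA, h1]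
    rcases mul_eq_zero.mp h2 with h | h
    · linarith
    · exact absurd h hDA.ne'
  · -- ih > 0 : contradiction
    exfalso
    have habmp : 0 < a * b * m * p := by positivity
    have hacpE : 0 < a * c * p * E := by positivity
    have h1 : 0 < a * b * m * p * ((1 - ih) * im) := by
      have he : a * b * m * p * ((1 - ih) * im) = μ * ih * P := by
        linear_combination -hE1'
      rw [he]; positivity
    have hprod1 : 0 < (1 - ih) * im := by
      rcases mul_pos_iff.mp h1 with h | h
      · exact h.2
      · exact absurd habmp (not_lt.mpr h.1.le)
    have him : 0 < im := by
      rcases mul_pos_iff.mp hprod1 with h | h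
      · exact h.2
      · exact absurd him0 (not_le.mpr h.2)
    have hih1' : ih < 1 := by
      rcases mul_pos_iff.mp hprod1 with h | h
      · linarith [h.1]
      · linarith [h.2]
    have h2 : 0 < a * c * p * E * ((1 - im - rm) * ih) := by
      have he : a * c * p * E * ((1 - im - rm) * ih) = δ * im * P := by
        linear_combination -hE2'
      rw [he]; positivity
    have hs : 0 < 1 - im - rm := by
      have h3 : 0 < (1 - im - rm) * ih := by
        rcases mul_pos_iff.mp h2 with h | h
        · exact h.2
        · exact absurd hacpE (not_lt.mpr h.1.le)
      rcases mul_pos_iff.mp h3 with h | h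
      · exact h.1
      · linarith [h.2]
    have him1 : im < 1 := by
      have h4 : 0 < D * (1 - im) := by
        rw [hkey]; exact mul_pos hDA hs
      rcases mul_pos_iff.mp h4 with h | h
      · linarith [h.2]
      · exact absurd hD (not_lt.mpr h.1.le)
    -- multiply E1' and E2'
    have hprod : μ * δ * P ^ 2 * (ih * im)
        = (K * (1 - ih) * (1 - im - rm)) * (ih * im) := by
      rw [hKdef]
      linear_combination (δ * im * P) * hE1' + (a * b * m * p * (1 - ih) * im) * hE2'
    have hfac : μ * δ * P ^ 2 = K * (1 - ih) * (1 - im - rm) :=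
      mul_right_cancel₀ (by positivity) hprod
    have h5 : μ * δ * P ^ 2 * (D + A) = K * (1 - ih) * (1 - im) * D := by
      linear_combination (D + A) * hfac - (K * (1 - ih)) * hkey
    have h16 : (1 - ih) * (1 - im) < 1 := by
      have t : (1 - ih) * (1 - im) = 1 - im - ih * (1 - im) := by ring
      rw [t]
      have t2 : 0 < ih * (1 - im) := mul_pos hihpos (by linarith)
      linarith
    have h6 : K * (1 - ih) * (1 - im) * D < K * D := by
      have hKD : 0 < K * D := mul_pos hK hD
      calc K * (1 - ih) * (1 - im) * D = (K * D) * ((1 - ih) * (1 - im)) := by ring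
        _ < (K * D) * 1 := by exact mul_lt_mul_of_pos_left h16 hKD
        _ = K * D := mul_one _
    have h7 : K * D ≤ μ * δ * P ^ 2 * (D + A) := by
      have t := mul_le_mul_of_nonneg_right hR0le' hDA.le
      have e1 : K * (1 - r) * (D + A) = K * D := by linear_combination K * h1r
      have e2 : δ * μ * P ^ 2 * (D + A) = μ * δ * P ^ 2 * (D + A) := by ring
      linarith [t, e1, e2]
    linarith [h5, h6, h7]
end

section
/- If R0 > 1, then the endemic equilibrium values are biologically admissible: 0 < i_h1 < 1, 0 < i_m1 < 1, 0 < r_m1 < 1, and i_m1 + r_m1 < 1, where i_h1 = (R0−1)·δμ·(p+qx)² / [(1−r)·acp·e^{−Λτ}·(abmp + μ(p+qx))], i_m1 = (R0−1)·(p+qx)²·μδ / [abmp·(1−r)·(δ(p+qx) + acp·e^{−Λτ} + δaγqx/(δ+θ))], and r_m1 = r·(1 − i_m1). -/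
/-- If R0 > 1 then the endemic equilibrium values are
biologically admissible: 0 < i_h1 < 1, 0 < i_m1 < 1, 0 < r_m1 < 1 and
i_m1 + r_m1 < 1. -/
theorem endemic_equilibrium_admissible_of_R0_gt_one
    (a b c m δ μ θ γ τ x p q r Λ R0 ih1 im1 rm1 : ℝ)
    (ha : 0 < a) (hb : 0 < b) (hc : 0 < c) (hm : 0 < m)
    (hδ : 0 < δ) (hμ : 0 < μ) (hθ : 0 < θ) (hγ : 0 < γ)
    (hτ : 0 < τ) (hx : 0 < x) (hp0 : 0 < p) (hp1 : p < 1)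
    (hq : q = 1 - p)
    (hr : r = a * γ * q * x / ((p + q * x) * (δ + θ) + a * γ * q * x))
    (hΛ : Λ = δ + a * γ * q * x / (p + q * x))
    (hR0 : R0 = a ^ 2 * b * c * m * p ^ 2 * (1 - r) * Real.exp (-Λ * τ) /
      (δ * μ * (p + q * x) ^ 2))
    (hR0gt : 1 < R0)
    (hih1 : ih1 = (R0 - 1) * δ * μ * (p + q * x) ^ 2 /
      ((1 - r) * (a * c * p) * Real.exp (-Λ * τ) * (a * b * m * p + μ * (p + q * x))))
    (him1 : im1 = (R0 - 1) * (p + q * x) ^ 2 * μ * δ /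
      (a * b * m * p * (1 - r) *
        (δ * (p + q * x) + a * c * p * Real.exp (-Λ * τ) + δ * a * γ * q * x / (δ + θ))))
    (hrm1 : rm1 = r * (1 - im1)) :
    (0 < ih1 ∧ ih1 < 1) ∧ (0 < im1 ∧ im1 < 1) ∧ (0 < rm1 ∧ rm1 < 1) ∧
    im1 + rm1 < 1 := by

  have hq0 : 0 < q := by rw [hq]; linarith
  have hP : 0 < p + q * x := by positivity
  have hE : 0 < Real.exp (-Λ * τ) := Real.exp_pos _
  have hN : 0 < a * γ * q * x := by positivity
  have hD : 0 < (p + q * x) * (δ + θ) := by positivity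
  have hr0 : 0 < r := by rw [hr]; positivity
  have hr1 : r < 1 := by
    rw [hr, div_lt_one (by linarith)]; linarith
  have h1r : 0 < 1 - r := by linarith
  have hR0m : 0 < R0 - 1 := by linarith
  have hkey : a ^ 2 * b * c * m * p ^ 2 * (1 - r) * Real.exp (-Λ * τ)
      = R0 * (δ * μ * (p + q * x) ^ 2) := by
    rw [hR0]; field_simp
  -- ih1
  have hden1 : 0 < (1 - r) * (a * c * p) * Real.exp (-Λ * τ) *
      (a * b * m * p + μ * (p + q * x)) := by positivity
  have hih1pos : 0 < ih1 := by
    rw [hih1]; exact div_pos (by positivity) hden1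
  have hih1lt : ih1 < 1 := by
    rw [hih1, div_lt_one hden1]
    have h5 : (1 - r) * (a * c * p) * Real.exp (-Λ * τ) *
        (a * b * m * p + μ * (p + q * x))
        = R0 * (δ * μ * (p + q * x) ^ 2)
          + (1 - r) * (a * c * p) * Real.exp (-Λ * τ) * (μ * (p + q * x)) := by
      rw [← hkey]; ring
    have h6 : 0 < (1 - r) * (a * c * p) * Real.exp (-Λ * τ) * (μ * (p + q * x)) := by
      positivity
    have h7 : 0 < δ * μ * (p + q * x) ^ 2 := by positivity
    have h8 : (R0 - 1) * δ * μ * (p + q * x) ^ 2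
        = R0 * (δ * μ * (p + q * x) ^ 2) - δ * μ * (p + q * x) ^ 2 := by ring
    linarith
  -- im1
  have hden2 : 0 < a * b * m * p * (1 - r) *
      (δ * (p + q * x) + a * c * p * Real.exp (-Λ * τ) + δ * a * γ * q * x / (δ + θ)) := by
    positivity
  have him1pos : 0 < im1 := by
    rw [him1]; exact div_pos (by positivity) hden2
  have him1lt : im1 < 1 := by
    rw [him1, div_lt_one hden2]
    have h3 : 0 < δ * a * γ * q * x / (δ + θ) := by positivity
    have h5 : a * b * m * p * (1 - r) *
        (δ * (p + q * x) + a * c * p * Real.exp (-Λ * τ) + δ * a * γ * q * x / (δ + θ))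
        = R0 * (δ * μ * (p + q * x) ^ 2)
          + a * b * m * p * (1 - r) * (δ * (p + q * x))
          + a * b * m * p * (1 - r) * (δ * a * γ * q * x / (δ + θ)) := by
      rw [← hkey]; ring
    have h6 : 0 < a * b * m * p * (1 - r) * (δ * (p + q * x)) := by positivity
    have h6' : 0 < a * b * m * p * (1 - r) * (δ * a * γ * q * x / (δ + θ)) := by positivity
    have h7 : 0 < δ * μ * (p + q * x) ^ 2 := by positivity
    have h8 : (R0 - 1) * (p + q * x) ^ 2 * μ * δ
        = R0 * (δ * μ * (p + q * x) ^ 2) - δ * μ * (p + q * x) ^ 2 := by ring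
    linarith
  have hrm1pos : 0 < rm1 := by
    rw [hrm1]; exact mul_pos hr0 (by linarith)
  have hrm1lt : rm1 < 1 := by
    rw [hrm1]
    have : r * (1 - im1) < r * 1 := mul_lt_mul_of_pos_left (by linarith) hr0
    linarith
  have hsum : im1 + rm1 < 1 := by
    rw [hrm1]
    have h9 : (1 - r) * im1 < (1 - r) * 1 := mul_lt_mul_of_pos_left him1lt h1r
    nlinarith
  exact ⟨⟨hih1pos, hih1lt⟩, ⟨him1pos, him1lt⟩, ⟨hrm1pos, hrm1lt⟩, hsum⟩
end

section
/- Suppose δ, μ, τ are positive reals, 0 < R0 ≤ 1, and λ ∈ ℂ satisfies F(λ) = 0 with Re λ ≥ 0. Then R0 = 1 and λ = 0. In particular, if R0 < 1 every complex root of F has strictly negative real part. -/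
/-!
Write `F(λ) = (λ + δ)(λ + μ) - R0 δ μ e^{-λτ}`. For `Re λ ≥ 0` and `c ≥ 0` we have
`|λ + c| ≥ c`, strictly unless `λ = 0`, while `|R0 δ μ e^{-λτ}| ≤ δ μ`. So a root with
`Re λ ≥ 0` must be `λ = 0`, and then `F(0) = δ μ (1 - R0) = 0` forces `R0 = 1`.
-/

open Complex

noncomputable def charFun (δ μ τ R0 : ℝ) (lam : ℂ) : ℂ :=
  lam ^ 2 + ((δ : ℂ) + (μ : ℂ)) * lam + (δ : ℂ) * (μ : ℂ)
    - (R0 : ℂ) * (δ : ℂ) * (μ : ℂ) * exp (-lam * (τ : ℂ))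

section CharFun

variable {δ μ τ R0 : ℝ}

lemma charFun_eq_mul_sub (lam : ℂ) :
    charFun δ μ τ R0 lam = (lam + δ) * (lam + μ) - R0 * δ * μ * exp (-lam * τ) := by
  unfold charFun
  ring

lemma charFun_zero : charFun δ μ τ R0 0 = δ * μ * (1 - R0) := by
  simp only [charFun, neg_zero, zero_mul, exp_zero]
  ring

lemma lt_norm_add_ofReal {z : ℂ} {c : ℝ} (hc : 0 ≤ c) (hz : 0 ≤ z.re) (hz0 : z ≠ 0) :
    c < ‖z + c‖ := by
  have hnormSq : 0 < z.re ^ 2 + z.im ^ 2 := by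
    simpa only [normSq_apply, ← sq] using normSq_pos.2 hz0
  have hsq : ‖z + c‖ ^ 2 = (z.re + c) ^ 2 + z.im ^ 2 := by
    rw [Complex.sq_norm, normSq_apply, add_re, add_im, ofReal_re, ofReal_im, add_zero]
    ring
  refine lt_of_pow_lt_pow_left₀ 2 (norm_nonneg _) ?_
  nlinarith [mul_nonneg hc hz]

lemma norm_exp_neg_mul_ofReal_le_one {z : ℂ} {τ : ℝ} (hz : 0 ≤ z.re) (hτ : 0 ≤ τ) :
    ‖exp (-z * τ)‖ ≤ 1 := by
  rw [norm_exp, Real.exp_le_one_iff, re_mul_ofReal, neg_re]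
  nlinarith

lemma eq_zero_of_charFun_eq_zero_of_re_nonneg (hδ : 0 ≤ δ) (hμ : 0 ≤ μ) (hτ : 0 ≤ τ)
    (hR0 : |R0| ≤ 1) {lam : ℂ} (hF : charFun δ μ τ R0 lam = 0) (hre : 0 ≤ lam.re) :
    lam = 0 := by
  by_contra hlam
  have hfactor : (lam + δ) * (lam + μ) = R0 * δ * μ * exp (-lam * τ) := by
    rw [← sub_eq_zero, ← charFun_eq_mul_sub, hF]
  have hlower : δ * μ < ‖(lam + δ) * (lam + μ)‖ := by
    rw [norm_mul]
    exact mul_lt_mul'' (lt_norm_add_ofReal hδ hre hlam) (lt_norm_add_ofReal hμ hre hlam) hδ hμ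
  have hupper : ‖(R0 : ℂ) * δ * μ * exp (-lam * τ)‖ ≤ δ * μ := by
    simp only [norm_mul, norm_real, Real.norm_eq_abs, abs_of_nonneg hδ, abs_of_nonneg hμ]
    calc |R0| * δ * μ * ‖exp (-lam * τ)‖ ≤ 1 * δ * μ * 1 := by
          gcongr
          exact norm_exp_neg_mul_ofReal_le_one hre hτ
      _ = δ * μ := by ring
  rw [hfactor] at hlower
  exact hlower.not_ge hupper

lemma eq_one_of_charFun_zero_eq_zero (hδ : 0 < δ) (hμ : 0 < μ)
    (hF : charFun δ μ τ R0 0 = 0) : R0 = 1 := by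
  rw [charFun_zero] at hF
  have hδμ : (δ : ℂ) * μ ≠ 0 := by exact_mod_cast (mul_pos hδ hμ).ne'
  have := (mul_eq_zero.1 hF).resolve_left hδμ
  exact_mod_cast (sub_eq_zero.1 this).symm

end CharFun

/-- If 0 < R0 ≤ 1 and λ ∈ ℂ satisfies F(λ) = 0 with Re λ ≥ 0,
then R0 = 1 and λ = 0. In particular, if R0 < 1 every complex root of F has
strictly negative real part. -/
theorem characteristic_roots_of_R0_le_one
    (δ μ τ R0 : ℝ) (hδ : 0 < δ) (hμ : 0 < μ) (hτ : 0 < τ)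
    (hR0 : 0 < R0) (hR0le : R0 ≤ 1) :
    (∀ lam : ℂ,
      lam ^ 2 + ((δ : ℂ) + (μ : ℂ)) * lam + (δ : ℂ) * (μ : ℂ)
        - (R0 : ℂ) * (δ : ℂ) * (μ : ℂ) * Complex.exp (-lam * (τ : ℂ)) = 0 →
      0 ≤ lam.re → R0 = 1 ∧ lam = 0) ∧
    (R0 < 1 → ∀ lam : ℂ,
      lam ^ 2 + ((δ : ℂ) + (μ : ℂ)) * lam + (δ : ℂ) * (μ : ℂ)
        - (R0 : ℂ) * (δ : ℂ) * (μ : ℂ) * Complex.exp (-lam * (τ : ℂ)) = 0 →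
      lam.re < 0) := by
  have hR0abs : |R0| ≤ 1 := abs_le.2 ⟨by linarith, hR0le⟩
  have root_of_re_nonneg : ∀ lam : ℂ, charFun δ μ τ R0 lam = 0 → 0 ≤ lam.re →
      R0 = 1 ∧ lam = 0 := by
    intro lam hF hre
    obtain rfl := eq_zero_of_charFun_eq_zero_of_re_nonneg hδ.le hμ.le hτ.le hR0abs hF hre
    exact ⟨eq_one_of_charFun_zero_eq_zero hδ hμ hF, rfl⟩
  refine ⟨root_of_re_nonneg, fun hlt lam hF => ?_⟩
  by_contra! hre
  exact hlt.ne (root_of_re_nonneg lam hF hre).1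
end

section
/- Suppose δ, μ, τ are positive reals and 0 < R0 < 1. Then for every real ω, one has ω⁴ + (μ² + δ²)ω² + δ²μ² − (R0·δμ)² > 0; consequently F has no purely imaginary root, i.e., F(iω) ≠ 0 for every real ω. -/
/-!
The polynomial part of `F` factors as `(λ + δ)(λ + μ)`, so at `λ = iω` its squared modulus is
`(ω² + δ²)(ω² + μ²) ≥ δ²μ²`, whereas the delay term `R0 δ μ e^{-iωτ}` has constant squared modulus
`(R0 δ μ)² < δ²μ²`. The two terms can therefore never cancel on the imaginary axis.
-/

open Complex

theorem sq_mul_mul_lt_of_abs_lt_one {r a b : ℝ} (hr : |r| < 1) (ha : a ≠ 0) (hb : b ≠ 0)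
    (ω : ℝ) : (r * a * b) ^ 2 < (ω ^ 2 + a ^ 2) * (ω ^ 2 + b ^ 2) :=
  calc (r * a * b) ^ 2 = r ^ 2 * (a * b) ^ 2 := by ring
    _ < 1 * (a * b) ^ 2 := by
      gcongr
      exact (sq_lt_one_iff_abs_lt_one r).2 hr
    _ ≤ (ω ^ 2 + a ^ 2) * (ω ^ 2 + b ^ 2) := by nlinarith [sq_nonneg ω, sq_nonneg a, sq_nonneg b]

theorem normSq_ofReal_mul_I_add_mul_ofReal_mul_I_add (ω a b : ℝ) :
    normSq ((ω * I + a) * (ω * I + b)) = (ω ^ 2 + a ^ 2) * (ω ^ 2 + b ^ 2) := by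
  rw [normSq_mul, add_comm _ (a : ℂ), add_comm _ (b : ℂ), normSq_add_mul_I, normSq_add_mul_I]
  ring

theorem norm_exp_neg_ofReal_mul_I_mul_ofReal (ω τ : ℝ) : ‖exp (-(ω * I) * τ)‖ = 1 := by
  rw [show -((ω : ℂ) * I) * τ = ((-(ω * τ) : ℝ) : ℂ) * I by push_cast; ring]
  exact norm_exp_ofReal_mul_I _

theorem no_purely_imaginary_characteristic_root_general
    (δ μ τ R0 : ℝ) (hδ : 0 < δ) (hμ : 0 < μ)
    (hR0 : 0 < R0) (hR0lt : R0 < 1) :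
    (∀ ω : ℝ,
      0 < ω ^ 4 + (μ ^ 2 + δ ^ 2) * ω ^ 2 + δ ^ 2 * μ ^ 2 - (R0 * δ * μ) ^ 2) ∧
    (∀ ω : ℝ,
      ((ω : ℂ) * Complex.I) ^ 2 + ((δ : ℂ) + (μ : ℂ)) * ((ω : ℂ) * Complex.I)
        + (δ : ℂ) * (μ : ℂ)
        - (R0 : ℂ) * (δ : ℂ) * (μ : ℂ)
          * Complex.exp (-((ω : ℂ) * Complex.I) * (τ : ℂ)) ≠ 0) := by
  have hR0abs : |R0| < 1 := abs_lt.2 ⟨by linarith, hR0lt⟩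
  have hgap := sq_mul_mul_lt_of_abs_lt_one hR0abs hδ.ne' hμ.ne'
  refine ⟨fun ω => sub_pos.2 ((hgap ω).trans_eq (by ring)), fun ω hroot => (hgap ω).ne' ?_⟩
  have hfactor : (ω * I + δ) * (ω * I + μ) = (R0 * δ * μ : ℝ) * exp (-(ω * I) * τ) := by
    push_cast
    linear_combination hroot
  rw [← normSq_ofReal_mul_I_add_mul_ofReal_mul_I_add, hfactor, normSq_mul, normSq_ofReal,
    normSq_eq_norm_sq (exp _), norm_exp_neg_ofReal_mul_I_mul_ofReal]
  ring

/-- If 0 < R0 < 1, then ω⁴ + (μ²+δ²)ω² + δ²μ² − (R0 δ μ)² > 0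
for every real ω, and consequently F has no purely imaginary root. -/
theorem no_purely_imaginary_characteristic_root
    (δ μ τ R0 : ℝ) (hδ : 0 < δ) (hμ : 0 < μ) (hτ : 0 < τ)
    (hR0 : 0 < R0) (hR0lt : R0 < 1) :
    (∀ ω : ℝ,
      0 < ω ^ 4 + (μ ^ 2 + δ ^ 2) * ω ^ 2 + δ ^ 2 * μ ^ 2 - (R0 * δ * μ) ^ 2) ∧
    (∀ ω : ℝ,
      ((ω : ℂ) * Complex.I) ^ 2 + ((δ : ℂ) + (μ : ℂ)) * ((ω : ℂ) * Complex.I)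
        + (δ : ℂ) * (μ : ℂ)
        - (R0 : ℂ) * (δ : ℂ) * (μ : ℂ)
          * Complex.exp (-((ω : ℂ) * Complex.I) * (τ : ℂ)) ≠ 0) :=
  no_purely_imaginary_characteristic_root_general δ μ τ R0 hδ hμ hR0 hR0lt
end

section
/- Suppose δ, μ, τ are positive reals and R0 > 1. Then there exists a unique real λ > 0 with F(λ) = 0; moreover F(λ') < 0 for every real λ' with 0 ≤ λ' < λ. -/
/-- If R0 > 1 there is a unique real λ > 0 with F(λ) = 0, and
F(λ') < 0 for every real λ' with 0 ≤ λ' < λ. -/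
theorem unique_positive_characteristic_root_of_R0_gt_one
    (δ μ τ R0 : ℝ) (hδ : 0 < δ) (hμ : 0 < μ) (hτ : 0 < τ) (hR0 : 1 < R0) :
    ∃ lam : ℝ, (0 < lam ∧
        lam ^ 2 + (δ + μ) * lam + δ * μ - R0 * δ * μ * Real.exp (-lam * τ) = 0) ∧
      (∀ lam' : ℝ, 0 < lam' →
        lam' ^ 2 + (δ + μ) * lam' + δ * μ - R0 * δ * μ * Real.exp (-lam' * τ) = 0 →
        lam' = lam) ∧
      (∀ lam' : ℝ, 0 ≤ lam' → lam' < lam →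
        lam' ^ 2 + (δ + μ) * lam' + δ * μ - R0 * δ * μ * Real.exp (-lam' * τ) < 0) := by
  set f : ℝ → ℝ := fun x => x ^ 2 + (δ + μ) * x + δ * μ - R0 * δ * μ * Real.exp (-x * τ)
    with hf
  have hR0pos : (0:ℝ) < R0 := lt_trans one_pos hR0
  have hprod : 0 < R0 * δ * μ := by positivity
  have hmono : StrictMonoOn f (Set.Ici 0) := by
    intro a ha b hb hab
    have ha0 : (0:ℝ) ≤ a := ha
    have h2 : Real.exp (-b * τ) < Real.exp (-a * τ) := by
      apply Real.exp_lt_exp.mpr; nlinarith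
    simp only [hf]
    nlinarith
  have hcont : Continuous f := by
    simp only [hf]; fun_prop
  set M : ℝ := max 1 (R0 * δ * μ) with hM
  have hM1 : (1:ℝ) ≤ M := le_max_left _ _
  have hM2 : R0 * δ * μ ≤ M := le_max_right _ _
  have hMpos : (0:ℝ) < M := lt_of_lt_of_le one_pos hM1
  have hf0 : f 0 < 0 := by
    simp only [hf, Real.exp_zero]
    norm_num
    nlinarith
  have hfM : 0 < f M := by
    have he : Real.exp (-M * τ) < 1 := by
      rw [Real.exp_lt_one_iff]; nlinarith
    have hMsq : R0 * δ * μ ≤ M ^ 2 := by nlinarith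
    simp only [hf]
    nlinarith [mul_pos hδ hμ]
  obtain ⟨lam, hmem, heq⟩ := intermediate_value_Icc hMpos.le hcont.continuousOn
    ⟨hf0.le, hfM.le⟩
  have hlam0 : 0 ≤ lam := hmem.1
  have hlampos : 0 < lam := by
    rcases hlam0.lt_or_eq with h | h
    · exact h
    · exfalso; rw [← h] at heq; rw [heq] at hf0; exact lt_irrefl _ hf0
  refine ⟨lam, ⟨hlampos, heq⟩, ?_, ?_⟩
  · intro lam' hlam' heq'
    exact hmono.injOn hlam'.le hlam0 (heq'.trans heq.symm)
  · intro lam' h0 hlt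
    have := hmono h0 hlam0 hlt
    rw [heq] at this
    exact this
end

section
/- Let (I_h^1, …, I_h^T, I_m, R_m) satisfy the heterogeneous-mixing equilibrium system (H1)–(H3) with 0 ≤ I_h^i ≤ N_i for each i, 0 ≤ I_m, 0 ≤ R_m, and I_m + R_m ≤ M. Then: (a) I_m = 0 if and only if I_h^i = 0 for every i; (b) if I_m > 0 then I_h^i > 0 for every i. Hence every equilibrium other than the disease-free one has strictly positive infection levels in both hosts and vectors. -/
open Finset in
/-- At any admissible heterogeneous-mixing equilibrium,
(a) I_m = 0 iff I_h^i = 0 for every i; (b) if I_m > 0 then I_h^i > 0 for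
every i. Hence each equilibrium other than the disease-free one has
strictly positive infection levels in both hosts and vectors. -/
theorem heterogeneous_equilibrium_dichotomy
    (a b c γ δ μ θ τ x M N : ℝ) (T : ℕ) (hT : 1 ≤ T)
    (k Npop : Fin T → ℝ)
    (ha : 0 < a) (hb : 0 < b) (hc : 0 < c) (hγ : 0 < γ)
    (hδ : 0 < δ) (hμ : 0 < μ) (hθ : 0 < θ) (hτ : 0 < τ)
    (hx : 0 < x) (hM : 0 < M) (hN : 0 < N)
    (hk : ∀ i, 0 < k i) (hNi : ∀ i, 0 < Npop i)
    (hNsum : ∑ i, Npop i = N)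
    (p q D kbar ζ : ℝ)
    (hp0 : 0 < p) (hp1 : p < 1) (hq : q = 1 - p)
    (hD : D = p * ∑ j, k j * Npop j + q * N * x)
    (hkbar : kbar = (∑ j, k j * Npop j) / N)
    (hζ : ζ = δ + a * γ * q * x / (p * kbar + q * x))
    (Ih : Fin T → ℝ) (Im Rm : ℝ)
    (hIh0 : ∀ i, 0 ≤ Ih i) (hIh1 : ∀ i, Ih i ≤ Npop i)
    (hIm0 : 0 ≤ Im) (hRm0 : 0 ≤ Rm) (hsum : Im + Rm ≤ M)
    -- (H1)
    (hH1 : ∀ i, μ * Ih i = a * b * k i * p * (Npop i - Ih i) * Im / D)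
    -- (H2)
    (hH2 : δ * Im =
      a * c * p * (M - Im - Rm) * Real.exp (-ζ * τ) * (∑ j, k j * Ih j) / D)
    -- (H3)
    (hH3 : (θ + δ) * Rm = a * γ * q * N * x * (M - Im - Rm) / D) :
    (Im = 0 ↔ ∀ i, Ih i = 0) ∧ (0 < Im → ∀ i, 0 < Ih i) := by
  have hq0 : 0 < q := by rw [hq]; linarith
  have hSpos : 0 < ∑ j, k j * Npop j := by
    apply Finset.sum_pos
    · intro i _; exact mul_pos (hk i) (hNi i)
    · exact ⟨⟨0, by omega⟩, Finset.mem_univ _⟩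
  have hDpos : 0 < D := by
    rw [hD]
    have := mul_pos hp0 hSpos
    have := mul_pos (mul_pos hq0 hN) hx
    linarith
  have hb' : 0 < Im → ∀ i, 0 < Ih i := by
    intro hIm i
    rcases lt_or_eq_of_le (hIh0 i) with h | h
    · exact h
    · exfalso
      have h1 := hH1 i
      rw [← h] at h1
      have hpos : 0 < a * b * k i * p * (Npop i - 0) * Im / D := by
        apply div_pos _ hDpos
        exact mul_pos (mul_pos (mul_pos (mul_pos (mul_pos ha hb) (hk i)) hp0)
          (by simpa using hNi i)) hIm
      linarith
  refine ⟨⟨?_, ?_⟩, hb'⟩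
  · intro hIm i
    have h1 := hH1 i
    rw [hIm] at h1
    simp at h1
    rcases h1 with h | h
    · exact absurd h (ne_of_gt hμ)
    · exact h
  · intro hall
    have hs : (∑ j, k j * Ih j) = 0 := by
      apply Finset.sum_eq_zero; intro j _; rw [hall j]; ring
    rw [hs] at hH2
    simp at hH2
    rcases hH2 with h | h
    · exact absurd h (ne_of_gt hδ)
    · exact h
end

section
/- The greedy allocation B* is the unique maximizer: if x is a feasible allocation with Σ_i k_i·x_i = Σ_i k_i·B*_i, then x_i = B*_i for every i. -/
/-!
Let `d = B* - x`. Both allocations spend the whole budget, so `∑ d = 0`, and the greedy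
allocation has a threshold shape: once some class receives a positive amount, every higher
class is full. Hence `d ≤ 0` below the least index `p` with `d p > 0` and `d ≥ 0` above it, so
`∑ (k i - k p) d i` is a sum of nonnegative terms. It equals `∑ k i d i - k p ∑ d i = 0`, and
strict monotonicity of `k` then forces `d = 0`.
-/

open Finset

section Pivot

variable {ι : Type*} [Fintype ι] [LinearOrder ι] {k d : ι → ℝ}

theorem eq_zero_of_sum_eq_zero_of_sum_mul_eq_zero_of_pivot (hk : StrictMono k) (p : ι)
    (hlt : ∀ i < p, d i ≤ 0) (hgt : ∀ i, p < i → 0 ≤ d i)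
    (hd : ∑ i, d i = 0) (hkd : ∑ i, k i * d i = 0) (i : ι) : d i = 0 := by
  have hterm : ∀ i, 0 ≤ (k i - k p) * d i := by
    intro i
    rcases lt_trichotomy i p with h | rfl | h
    · exact mul_nonneg_of_nonpos_of_nonpos (sub_nonpos.2 (hk h).le) (hlt i h)
    · simp
    · exact mul_nonneg (sub_nonneg.2 (hk h).le) (hgt i h)
  have hzero : ∑ i, (k i - k p) * d i = 0 := by
    simp only [sub_mul, sum_sub_distrib, ← mul_sum, hkd, hd, mul_zero, sub_zero]
  have hoff : ∀ i ≠ p, d i = 0 := fun i hi =>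
    (mul_eq_zero.1 ((sum_eq_zero_iff_of_nonneg fun i _ => hterm i).1 hzero i (mem_univ i))
      ).resolve_left (sub_ne_zero.2 (hk.injective.ne hi))
  by_cases hi : i = p
  · rw [← hd, sum_eq_single p (fun j _ hj => hoff j hj) (by simp), hi]
  · exact hoff i hi

theorem eq_zero_of_sum_eq_zero_of_sum_mul_eq_zero (hk : StrictMono k)
    (hsign : ∀ i j, i < j → 0 < d i → 0 ≤ d j)
    (hd : ∑ i, d i = 0) (hkd : ∑ i, k i * d i = 0) (i : ι) : d i = 0 := by
  by_cases hpos : ∃ j, 0 < d j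
  · obtain ⟨p, hp, hmin⟩ := wellFounded_lt.has_min {j | 0 < d j} hpos
    have hp0 := eq_zero_of_sum_eq_zero_of_sum_mul_eq_zero_of_pivot hk p
      (fun j hj => not_lt.1 fun h => hmin j h hj) (fun j hj => hsign p j hj hp) hd hkd p
    exact absurd hp (by simp [hp0])
  · simp only [not_exists, not_lt] at hpos
    exact (sum_eq_zero_iff_of_nonpos fun j _ => hpos j).1 hd i (mem_univ i)

end Pivot

section Greedy

variable {ι : Type*} [LinearOrder ι] {C : ι → ℝ} {B : ℝ}

noncomputable def greedyAlloc (s : Finset ι) (C : ι → ℝ) (B : ℝ) (i : ι) : ℝ :=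
  min (C i) (max 0 (B - ∑ j ∈ s.filter (fun j => i < j), C j))

theorem min_max_sub_add_min_eq {c S : ℝ} (hc : 0 ≤ c) :
    min c (max 0 (B - S)) + min B S = min B (c + S) := by
  rcases le_total B S with h | h
  · rw [max_eq_left (by linarith), min_eq_right hc, min_eq_left h,
      min_eq_left (by linarith)]
    ring
  · rw [max_eq_right (by linarith), min_eq_right h, min_comm B, ← min_add_add_right]
    ring_nf

theorem sum_greedyAlloc (hC : ∀ i, 0 ≤ C i) (hB : 0 ≤ B) (s : Finset ι) :
    ∑ i ∈ s, greedyAlloc s C B i = min B (∑ i ∈ s, C i) := by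
  classical
  induction s using Finset.induction_on_min with
  | empty => simp [hB]
  | insert a s ha ih =>
    have hnotin : a ∉ s := fun h => lt_irrefl a (ha a h)
    -- `a` lies below all of `s`, so adding it leaves the tail sums of the elements of `s` intact.
    have htail : ∀ i ∈ s, greedyAlloc (insert a s) C B i = greedyAlloc s C B i := by
      intro i hi
      simp only [greedyAlloc, filter_insert, if_neg (ha i hi).asymm]
    have hhead : greedyAlloc (insert a s) C B a = min (C a) (max 0 (B - ∑ j ∈ s, C j)) := by
      simp only [greedyAlloc, filter_insert, lt_irrefl, if_false, filter_true_of_mem ha]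
    rw [sum_insert hnotin, sum_insert hnotin, sum_congr rfl htail, ih, hhead,
      min_max_sub_add_min_eq (hC a)]

theorem greedyAlloc_eq_of_lt_of_pos (hC : ∀ i, 0 ≤ C i) {s : Finset ι} {i j : ι}
    (hj : j ∈ s) (hij : i < j) (hpos : 0 < greedyAlloc s C B i) :
    greedyAlloc s C B j = C j := by
  classical
  have hBi : 0 < B - ∑ l ∈ s.filter (fun l => i < l), C l := by
    simpa using (lt_min_iff.1 hpos).2
  have hsub : insert j (s.filter (fun l => j < l)) ⊆ s.filter (fun l => i < l) := by
    intro l hl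
    simp only [mem_insert, mem_filter] at hl ⊢
    rcases hl with rfl | ⟨hl, hjl⟩
    · exact ⟨hj, hij⟩
    · exact ⟨hl, hij.trans hjl⟩
  have hle := sum_le_sum_of_subset_of_nonneg hsub fun l _ _ => hC l
  rw [sum_insert (by simp)] at hle
  exact min_eq_left (le_max_of_le_right (by linarith))

end Greedy

open Finset in
theorem greedy_allocation_unique_maximizer_general
    (T : ℕ) (k C : Fin T → ℝ)
    (hk : StrictMono k) (hC : ∀ i, 0 ≤ C i)
    (B : ℝ) (hB0 : 0 ≤ B) (hBle : B ≤ ∑ i, C i)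
    (Bstar : Fin T → ℝ)
    (hBstar : ∀ i, Bstar i =
      min (C i) (max 0 (B - ∑ j ∈ univ.filter (fun j => i < j), C j))) :
    ∀ x : Fin T → ℝ, (∀ i, 0 ≤ x i ∧ x i ≤ C i) → (∑ i, x i = B) →
      (∑ i, k i * x i = ∑ i, k i * Bstar i) →
      ∀ i, x i = Bstar i := by
  intro x hx hsum hobj
  obtain rfl : Bstar = greedyAlloc univ C B := funext hBstar
  have hd : ∑ i, (greedyAlloc univ C B i - x i) = 0 := by
    rw [sum_sub_distrib, sum_greedyAlloc hC hB0, min_eq_left hBle, hsum, sub_self]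
  have hkd : ∑ i, k i * (greedyAlloc univ C B i - x i) = 0 := by
    simp only [mul_sub, sum_sub_distrib, hobj, sub_self]
  have hsign : ∀ i j, i < j → 0 < greedyAlloc univ C B i - x i →
      0 ≤ greedyAlloc univ C B j - x j := by
    intro i j hij hdi
    rw [greedyAlloc_eq_of_lt_of_pos hC (mem_univ j) hij (by linarith [(hx i).1])]
    linarith [(hx j).2]
  intro i
  linarith [eq_zero_of_sum_eq_zero_of_sum_mul_eq_zero hk hsign hd hkd i]

open Finset in
/-- The greedy allocation B* is the unique maximizer: any
feasible allocation x attaining the same objective value Σ_i k_i x_i as B*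
coincides with B*. -/
theorem greedy_allocation_unique_maximizer
    (T : ℕ) (hT : 1 ≤ T) (k C : Fin T → ℝ)
    (hk : StrictMono k) (hC : ∀ i, 0 ≤ C i)
    (B : ℝ) (hB0 : 0 ≤ B) (hBle : B ≤ ∑ i, C i)
    (Bstar : Fin T → ℝ)
    (hBstar : ∀ i, Bstar i =
      min (C i) (max 0 (B - ∑ j ∈ univ.filter (fun j => i < j), C j))) :
    ∀ x : Fin T → ℝ, (∀ i, 0 ≤ x i ∧ x i ≤ C i) → (∑ i, x i = B) →
      (∑ i, k i * x i = ∑ i, k i * Bstar i) →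
      ∀ i, x i = Bstar i :=
  greedy_allocation_unique_maximizer_general T k C hk hC B hB0 hBle Bstar hBstar
end

section
/- The targeted-bait reproductive number is strictly decreasing in the effective bait density: the function R0(y) = a²·b·c·m·p²·k̄·κ·(1 − r(y))·e^{−ζ(y)·τ} / (δμ·(k̄p + qy)²) is strictly monotonically decreasing on [0, ∞), where r(y) = aγqy / ((p·k̄ + qy)(δ+θ) + aγqy) and ζ(y) = δ + aγqy/(p·k̄ + qy). -/
/-!
Every factor of `R0` is positive and strictly decreasing in `y`: the fractions `r` and
`ζ - δ` are of the form `A y / (B + C y)` with `A, B > 0`, hence strictly increasing on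
`[0, ∞)`, so `1 - r` and `exp (-ζ τ)` decrease, while the denominator `δ μ (k̄ p + q y)²`
increases. A product of positive strictly decreasing functions is strictly decreasing.
-/

open Set

section Monotonicity

variable {α : Type*} [Preorder α] {s : Set α}

theorem StrictAntiOn.mul_of_nonneg {R : Type*} [Semiring R] [PartialOrder R]
    [IsStrictOrderedRing R] {f g : α → R} (hf : StrictAntiOn f s) (hg : StrictAntiOn g s)
    (hf0 : ∀ x ∈ s, 0 ≤ f x) (hg0 : ∀ x ∈ s, 0 ≤ g x) :
    StrictAntiOn (fun x => f x * g x) s :=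
  fun _ hx _ hy hxy => mul_lt_mul'' (hf hx hy hxy) (hg hx hy hxy) (hf0 _ hy) (hg0 _ hy)

theorem StrictAntiOn.div_of_pos {K : Type*} [Field K] [LinearOrder K] [IsStrictOrderedRing K]
    {f g : α → K} (hf : StrictAntiOn f s) (hg : StrictMonoOn g s)
    (hf0 : ∀ x ∈ s, 0 ≤ f x) (hg0 : ∀ x ∈ s, 0 < g x) :
    StrictAntiOn (fun x => f x / g x) s :=
  fun _ hx _ hy hxy => div_lt_div₀ (hf hx hy hxy) (hg hx hy hxy).le (hf0 _ hx) (hg0 _ hx)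

end Monotonicity

section LinearFractional

variable {K : Type*} [Field K] [LinearOrder K] [IsStrictOrderedRing K] {A B C : K}

theorem strictMonoOn_mul_div_add_mul (hA : 0 < A) (hB : 0 < B) (hC : 0 ≤ C) :
    StrictMonoOn (fun y => A * y / (B + C * y)) (Ici 0) := by
  intro x (hx : 0 ≤ x) y (hy : 0 ≤ y) hxy
  rw [div_lt_div_iff₀ (by positivity) (by positivity)]
  nlinarith [mul_lt_mul_of_pos_left hxy (mul_pos hA hB)]

theorem mul_div_add_mul_lt_one (hA : 0 ≤ A) (hAC : A ≤ C) (hB : 0 < B) {y : K} (hy : 0 ≤ y) :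
    A * y / (B + C * y) < 1 := by
  have hAy : 0 ≤ A * y := mul_nonneg hA hy
  have hCy : A * y ≤ C * y := mul_le_mul_of_nonneg_right hAC hy
  rw [div_lt_one (by linarith)]
  linarith

end LinearFractional

/-- The targeted-bait reproductive number
R0(y) = a²bcmp²·k̄·κ·(1−r(y))·e^{−ζ(y)τ}/(δμ(k̄p+qy)²) is strictly
decreasing in the effective bait density y on [0, ∞). -/
theorem targeted_R0_strictAntiOn
    (a b c m δ μ θ γ τ kbar κ p q : ℝ)
    (ha : 0 < a) (hb : 0 < b) (hc : 0 < c) (hm : 0 < m)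
    (hδ : 0 < δ) (hμ : 0 < μ) (hθ : 0 < θ) (hγ : 0 < γ)
    (hτ : 0 < τ) (hkbar : 0 < kbar) (hκ : 0 < κ)
    (hp0 : 0 < p) (hp1 : p < 1) (hq : q = 1 - p) :
    StrictAntiOn
      (fun y : ℝ =>
        a ^ 2 * b * c * m * p ^ 2 * kbar * κ *
          (1 - a * γ * q * y / ((p * kbar + q * y) * (δ + θ) + a * γ * q * y)) *
          Real.exp (-(δ + a * γ * q * y / (p * kbar + q * y)) * τ) /
          (δ * μ * (kbar * p + q * y) ^ 2))
      (Set.Ici (0 : ℝ)) := by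
  have hq0 : 0 < q := by linarith
  have hr_eq : ∀ y, (p * kbar + q * y) * (δ + θ) + a * γ * q * y
      = p * kbar * (δ + θ) + (q * (δ + θ) + a * γ * q) * y := fun y => by ring
  have hr := strictMonoOn_mul_div_add_mul (B := p * kbar * (δ + θ)) (C := q * (δ + θ) + a * γ * q)
    (by positivity : 0 < a * γ * q) (by positivity) (by positivity)
  simp only [← hr_eq] at hr
  have hζ := strictMonoOn_mul_div_add_mul (by positivity : 0 < a * γ * q)
    (by positivity : 0 < p * kbar) hq0.le
  refine (StrictAntiOn.mul_of_nonneg ?F1 ?E ?F1_nonneg ?E_nonneg).div_of_pos ?D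
    (fun y hy => mul_nonneg (?F1_nonneg y hy) (?E_nonneg y hy)) ?D_pos
  case F1 =>
    exact fun _ hx _ hy hxy =>
      mul_lt_mul_of_pos_left (sub_lt_sub_left (hr hx hy hxy) 1) (by positivity)
  case E =>
    exact Real.exp_strictMono.comp_strictAntiOn fun _ hx _ hy hxy =>
      mul_lt_mul_of_pos_right (neg_lt_neg (add_lt_add_right (hζ hx hy hxy) δ)) hτ
  case F1_nonneg =>
    intro y (hy : 0 ≤ y)
    have hr_lt_one := mul_div_add_mul_lt_one (by positivity : 0 ≤ a * γ * q)
      (le_add_of_nonneg_left (by positivity : 0 ≤ q * (δ + θ)))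
      (by positivity : 0 < p * kbar * (δ + θ)) hy
    rw [← hr_eq] at hr_lt_one
    have := sub_pos.2 hr_lt_one
    positivity
  case E_nonneg => exact fun _ _ => (Real.exp_pos _).le
  case D => exact fun x (hx : 0 ≤ x) y _ hxy => by gcongr
  case D_pos => exact fun y (hy : 0 ≤ y) => by positivity
end
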